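/- Let q be a prime power and let f : F_q^k → {0, 1, …, k} be the Hamming weight function f(u) = wt(u), and let t_d ≤ t_f be natural numbers. Suppose there exists a systematic [n, k] linear code over F_q with minimum distance at least 2t_d + 1. Then r_f(k, t_d, t_f) ≤ n − k + N(2t_f + 1, 2(t_f − t_d)), where N(λ, D) is the minimum length of a q-ary code with λ codewords and pairwise Hamming distance at least D. -/

import Mathlib

/-- An `(f, t_d, t_f)`-FCC (with `d_d = 2t_d+1`, `d_f = 2t_f+1`). -/
def IsFCC {F S : Type*} [Fintype F] [DecidableEq F] {k r : ℕ}
    (f : (Fin k → F) → S) (dd df : ℕ)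
    (c : (Fin k → F) → (Fin (k + r) → F)) : Prop :=
  (∀ u i, c u (Fin.castAdd r i) = u i) ∧
  (∀ u v, u ≠ v → dd ≤ hammingDist (c u) (c v)) ∧
  (∀ u v, f u ≠ f v → df ≤ hammingDist (c u) (c v))

/-- The optimal redundancy `r_f(k, t_d, t_f)`. -/
noncomputable def optRedundancy {F S : Type*} [Fintype F] [DecidableEq F] {k : ℕ}
    (f : (Fin k → F) → S) (dd df : ℕ) : ℕ :=
  sInf {r : ℕ | ∃ c : (Fin k → F) → (Fin (k + r) → F), IsFCC f dd df c}

/-- `N(M, d)`: the minimum length of a code over `F` with `M` codewords and pairwise Hamming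
distance at least `d`. -/
noncomputable def Ncode (F : Type*) [Fintype F] [DecidableEq F] (M d : ℕ) : ℕ :=
  sInf {n : ℕ | ∃ p : Fin M → Fin n → F, ∀ i j, i ≠ j → d ≤ hammingDist (p i) (p j)}

/-!
Encode `u` as `C u` followed by a word `p (wt u mod (2t_f+1))` of a code with `2t_f+1` words at
pairwise distance `2(t_f - t_d)`, of length `N(2t_f+1, 2(t_f - t_d))`. Take `u, v` with
`wt u ≠ wt v`. If their weights differ mod `2t_f+1`, the tags contribute `2(t_f - t_d)` on top of
the `2t_d+1` from `C`. Otherwise `|wt u - wt v| ≥ 2t_f+1`, so already `u` and `v`, hence their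
systematic encodings, are at distance at least `2t_f+1`.
-/

open Function

section Hamming

variable {β : Type*} [DecidableEq β]

theorem hammingDist_comp_le_of_injective {ι κ : Type*} [Fintype ι] [Fintype κ] {e : ι → κ}
    (he : Injective e) (x y : κ → β) : hammingDist (x ∘ e) (y ∘ e) ≤ hammingDist x y :=
  Finset.card_le_card_of_injOn e (by simp [Set.MapsTo]) he.injOn

theorem hammingDist_comp_equiv {ι κ : Type*} [Fintype ι] [Fintype κ] (e : ι ≃ κ)
    (x y : κ → β) : hammingDist (x ∘ e) (y ∘ e) = hammingDist x y := by
  refine (hammingDist_comp_le_of_injective e.injective x y).antisymm ?_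
  simpa [comp_def] using hammingDist_comp_le_of_injective e.symm.injective (x ∘ e) (y ∘ e)

theorem hammingDist_append {m n : ℕ} (x x' : Fin m → β) (y y' : Fin n → β) :
    hammingDist (Fin.append x y) (Fin.append x' y') = hammingDist x x' + hammingDist y y' := by
  simp only [hammingDist, Finset.card_filter, Fin.sum_univ_add, Fin.append_left, Fin.append_right]

theorem abs_hammingNorm_sub_le_hammingDist {ι : Type*} [Fintype ι] [Zero β] (x y : ι → β) :
    |(hammingNorm x : ℤ) - hammingNorm y| ≤ hammingDist x y := by
  have hx := hammingDist_triangle x y 0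
  have hy := hammingDist_triangle y x 0
  rw [hammingDist_zero_right, hammingDist_zero_right] at hx hy
  rw [hammingDist_comm] at hy
  rw [abs_sub_le_iff]
  omega

theorem le_hammingDist_of_hammingNorm_modEq {ι : Type*} [Fintype ι] [Zero β] {M : ℕ}
    {x y : ι → β} (hmod : hammingNorm x ≡ hammingNorm y [MOD M])
    (hne : hammingNorm x ≠ hammingNorm y) : M ≤ hammingDist x y := by
  have hM : (M : ℤ) ≤ |(hammingNorm y : ℤ) - hammingNorm x| :=
    not_lt.mp fun h => hne (hmod.eq_of_abs_lt h)
  have := abs_hammingNorm_sub_le_hammingDist y x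
  rw [hammingDist_comm] at this
  omega

/-- The block code: word `i` is the indicator of the `i`-th of `M` blocks of length `D`. -/
theorem exists_pairwise_le_hammingDist [Zero β] [One β] [NeZero (1 : β)] (M D : ℕ) :
    ∃ p : Fin M → Fin (M * D) → β, ∀ i j, i ≠ j → D ≤ hammingDist (p i) (p j) := by
  let block (i : Fin M) (a : Fin M × Fin D) : β := if a.1 = i then 1 else 0
  refine ⟨fun i => block i ∘ finProdFinEquiv.symm, fun i j hij => ?_⟩
  rw [hammingDist_comp_equiv]
  calc D = hammingDist (fun _ : Fin D => (1 : β)) (fun _ => 0) := by simp [hammingDist]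
    _ ≤ hammingDist (block i) (block j) := by
      simpa [block, comp_def, hij] using
        hammingDist_comp_le_of_injective (Prod.mk_right_injective i) (block i) (block j)

end Hamming

section Code

variable {F : Type*} [Fintype F] [DecidableEq F]

theorem exists_code_length_Ncode [Zero F] [One F] [NeZero (1 : F)] (M D : ℕ) :
    ∃ p : Fin M → Fin (Ncode F M D) → F, ∀ i j, i ≠ j → D ≤ hammingDist (p i) (p j) := by
  have hne :
      {n | ∃ p : Fin M → Fin n → F, ∀ i j, i ≠ j → D ≤ hammingDist (p i) (p j)}.Nonempty :=
    ⟨_, exists_pairwise_le_hammingDist M D⟩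
  exact Nat.sInf_mem hne

theorem isFCC_append {S : Type*} {k n m : ℕ} (hkn : k ≤ n) {f : (Fin k → F) → S}
    {dd df : ℕ} {C : (Fin k → F) → Fin n → F} {t : (Fin k → F) → Fin m → F}
    (hsys : ∀ u i, C u (Fin.castLE hkn i) = u i)
    (hC : ∀ u v, u ≠ v → dd ≤ hammingDist (C u) (C v))
    (hf : ∀ u v, f u ≠ f v → df ≤ hammingDist (C u) (C v) + hammingDist (t u) (t v)) :
    IsFCC f dd df (r := n - k + m) fun u => Fin.append (C u) (t u) ∘ Fin.cast (by omega) := by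
  have hdist : ∀ u v, hammingDist (Fin.append (C u) (t u) ∘ Fin.cast (by omega))
      (Fin.append (C v) (t v) ∘ Fin.cast (by omega) : Fin (k + (n - k + m)) → F) =
      hammingDist (C u) (C v) + hammingDist (t u) (t v) := fun u v =>
    (hammingDist_comp_equiv (finCongr (by omega)) _ _).trans (hammingDist_append _ _ _ _)
  refine ⟨fun u i => ?_, fun u v huv => ?_, fun u v huv => ?_⟩
  · simpa using Fin.append_left (C u) (t u) (Fin.castLE hkn i) ▸ hsys u i
  · exact (hC u v huv).trans (hdist u v ▸ Nat.le_add_right _ _)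
  · exact hdist u v ▸ hf u v huv

end Code

theorem optRedundancy_le_hammingWeight_general
    {F : Type*} [Field F] [Fintype F] [DecidableEq F]
    {k n : ℕ} (hkn : k ≤ n) (td tf : ℕ)
    (C : (Fin k → F) →ₗ[F] (Fin n → F))
    (hCsys : ∀ (u : Fin k → F) (i : Fin k), C u (Fin.castLE hkn i) = u i)
    (hCdist : ∀ u v : Fin k → F, u ≠ v → 2 * td + 1 ≤ hammingDist (C u) (C v)) :
    optRedundancy (fun u : Fin k → F => hammingNorm u) (2 * td + 1) (2 * tf + 1) ≤
      n - k + Ncode F (2 * tf + 1) (2 * (tf - td)) := by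
  obtain ⟨p, hp⟩ := exists_code_length_Ncode (F := F) (2 * tf + 1) (2 * (tf - td))
  let tag (u : Fin k → F) : Fin (2 * tf + 1) :=
    ⟨hammingNorm u % (2 * tf + 1), Nat.mod_lt _ (by omega)⟩
  refine Nat.sInf_le ⟨_, isFCC_append (t := p ∘ tag) hkn hCsys hCdist fun u v hwt => ?_⟩
  have huv : u ≠ v := fun h => hwt (congrArg hammingNorm h)
  by_cases hmod : hammingNorm u ≡ hammingNorm v [MOD 2 * tf + 1]
  · have hsub : hammingDist u v ≤ hammingDist (C u) (C v) := by
      simpa [comp_def, hCsys] using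
        hammingDist_comp_le_of_injective (Fin.castLE_injective hkn) (C u) (C v)
    exact (le_hammingDist_of_hammingNorm_modEq hmod hwt).trans (hsub.trans (Nat.le_add_right _ _))
  · have htag := hp (tag u) (tag v) fun h => hmod (congrArg Fin.val h)
    have := hCdist u v huv
    simp only [comp_apply]
    omega

/-- For the Hamming weight function `f(u) = wt(u)` on `F_q^k`, `t_d ≤ t_f`,
and a systematic `[n, k]` linear code over `F_q` of minimum distance at least `2t_d+1`,
`r_f(k, t_d, t_f) ≤ n − k + N(2t_f + 1, 2(t_f − t_d))`. -/
theorem optRedundancy_le_hammingWeight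
    {F : Type*} [Field F] [Fintype F] [DecidableEq F]
    {k n : ℕ} (hkn : k ≤ n) (td tf : ℕ) (htdtf : td ≤ tf)
    (C : (Fin k → F) →ₗ[F] (Fin n → F)) (hCinj : Function.Injective C)
    (hCsys : ∀ (u : Fin k → F) (i : Fin k), C u (Fin.castLE hkn i) = u i)
    (hCdist : ∀ u v : Fin k → F, u ≠ v → 2 * td + 1 ≤ hammingDist (C u) (C v)) :
    optRedundancy (fun u : Fin k → F => hammingNorm u) (2 * td + 1) (2 * tf + 1) ≤
      n - k + Ncode F (2 * tf + 1) (2 * (tf - td)) :=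
  optRedundancy_le_hammingWeight_general hkn td tf C hCsys hCdist
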